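/- arXiv:2410.23220 — 6 statements merged into one kernel-verified Lean document; each statement's English description precedes it below -/
import Mathlib

section
/- Let c_0, …, c_M ∈ ℝ^d with c_i ≠ c_{i−1} for all i, and let C : [0,1] → ℝ^d be the associated constant-speed piecewise linear curve with proportional segment lengths p_i. Then for all indices 1 ≤ j, k ≤ d, the second moment of C satisfies ∫₀¹ C(t)_j C(t)_k dt = (1/6) Σ_{i=1}^M p_i [ (c_{i−1} + c_i)_j (c_{i−1} + c_i)_k + (c_{i−1})_j (c_{i−1})_k + (c_i)_j (c_i)_k ]. -/
open MeasureTheory Filter Set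
noncomputable section

/-- Length of the `i`-th segment of the piecewise linear curve with vertices `c 0, …, c M`. -/
def segLen {d : ℕ} (c : ℕ → EuclideanSpace ℝ (Fin d)) (i : ℕ) : ℝ := ‖c (i + 1) - c i‖

/-- Total length `Z` of the piecewise linear curve with `M` segments. -/
def totalLen {d : ℕ} (c : ℕ → EuclideanSpace ℝ (Fin d)) (M : ℕ) : ℝ :=
  ∑ i ∈ Finset.range M, segLen c i

/-- The breakpoint `t_i = (Σ_{k<i} ‖c_{k+1} − c_k‖)/Z` of the constant-speed parameterization. -/
def knot {d : ℕ} (c : ℕ → EuclideanSpace ℝ (Fin d)) (M i : ℕ) : ℝ :=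
  (∑ k ∈ Finset.range i, segLen c k) / totalLen c M

/-- Proportional segment length `p_i = ‖c_{i+1} − c_i‖/Z` (here segments are indexed `0, …, M−1`,
corresponding to `p_1, …, p_M` in the paper). -/
def propLen {d : ℕ} (c : ℕ → EuclideanSpace ℝ (Fin d)) (M i : ℕ) : ℝ :=
  segLen c i / totalLen c M

/-- `f` is the constant-speed piecewise linear curve on `[0,1]` with vertices `c 0, …, c M`:
on each interval `[t_i, t_{i+1}]` it is given by the linear interpolation formula. -/
def IsPWLOf {d : ℕ} (c : ℕ → EuclideanSpace ℝ (Fin d)) (M : ℕ)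
    (f : ℝ → EuclideanSpace ℝ (Fin d)) : Prop :=
  ∀ i < M, ∀ t ∈ Set.Icc (knot c M i) (knot c M (i + 1)),
    f t = ((t - knot c M i) / (knot c M (i + 1) - knot c M i)) • c (i + 1)
        - ((t - knot c M (i + 1)) / (knot c M (i + 1) - knot c M i)) • c i


lemma quad_int (α β γ s e : ℝ) :
    (∫ t in s..e, (α * t ^ 2 + β * t + γ))
      = α * (e ^ 3 - s ^ 3) / 3 + β * (e ^ 2 - s ^ 2) / 2 + γ * (e - s) := by
  have h : ∀ t : ℝ, HasDerivAt (fun t => α * t ^ 3 / 3 + β * t ^ 2 / 2 + γ * t)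
      (α * t ^ 2 + β * t + γ) t := by
    intro t
    have h3 : HasDerivAt (fun t : ℝ => α * t ^ 3 / 3) (α * t ^ 2) t := by
      have := ((hasDerivAt_pow 3 t).const_mul α).div_const 3
      refine this.congr_deriv ?_; push_cast; ring
    have h2 : HasDerivAt (fun t : ℝ => β * t ^ 2 / 2) (β * t) t := by
      have := ((hasDerivAt_pow 2 t).const_mul β).div_const 2
      refine this.congr_deriv ?_; push_cast; ring
    have h1 : HasDerivAt (fun t : ℝ => γ * t) γ t := by
      simpa using (hasDerivAt_id t).const_mul γ
    exact (h3.add h2).add h1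
  rw [intervalIntegral.integral_eq_sub_of_hasDerivAt (fun t _ => h t)
    ((Continuous.intervalIntegrable (by fun_prop) s e))]
  ring

lemma seg_int (s e aj ak bj bk : ℝ) (hne : e - s ≠ 0) :
    (∫ t in s..e, (((t - s) / (e - s)) * bj - ((t - e) / (e - s)) * aj) *
        (((t - s) / (e - s)) * bk - ((t - e) / (e - s)) * ak))
      = (e - s) / 6 * ((aj + bj) * (ak + bk) + aj * ak + bj * bk) := by
  have key : ∀ t : ℝ, (((t - s) / (e - s)) * bj - ((t - e) / (e - s)) * aj) *
        (((t - s) / (e - s)) * bk - ((t - e) / (e - s)) * ak)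
      = ((bj - aj) * (bk - ak)) / (e - s) ^ 2 * t ^ 2
        + (((bj - aj) * (e * ak - s * bk) + (e * aj - s * bj) * (bk - ak)) / (e - s) ^ 2) * t
        + ((e * aj - s * bj) * (e * ak - s * bk)) / (e - s) ^ 2 := by
    intro t; field_simp; ring
  rw [intervalIntegral.integral_congr (g := fun t =>
    ((bj - aj) * (bk - ak)) / (e - s) ^ 2 * t ^ 2
        + (((bj - aj) * (e * ak - s * bk) + (e * aj - s * bj) * (bk - ak)) / (e - s) ^ 2) * t
        + ((e * aj - s * bj) * (e * ak - s * bk)) / (e - s) ^ 2) (fun t _ => key t), quad_int]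
  field_simp
  ring


/-- The second moment of a constant-speed piecewise linear curve:
for all coordinates `j, k`,
`∫₀¹ C(t)_j C(t)_k dt = (1/6) Σ_{i=1}^M p_i [(c_{i−1}+c_i)_j(c_{i−1}+c_i)_k + (c_{i−1})_j(c_{i−1})_k + (c_i)_j(c_i)_k]`. -/
theorem second_moment_pwl (d M : ℕ) (hM : 0 < M) (c : ℕ → EuclideanSpace ℝ (Fin d))
    (hc : ∀ i < M, c (i + 1) ≠ c i)
    (f : ℝ → EuclideanSpace ℝ (Fin d)) (hf : IsPWLOf c M f) :
    ∀ j k : Fin d,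
      (∫ t in (0:ℝ)..1, f t j * f t k)
        = (1 / 6 : ℝ) * ∑ i ∈ Finset.range M, propLen c M i *
            ((c i j + c (i + 1) j) * (c i k + c (i + 1) k)
              + c i j * c i k + c (i + 1) j * c (i + 1) k) := by
  intro j k
  have hseg : ∀ i < M, 0 < segLen c i := fun i hi =>
    norm_pos_iff.mpr (sub_ne_zero.mpr (hc i hi))
  have hZ : 0 < totalLen c M :=
    Finset.sum_pos (fun i hi => hseg i (Finset.mem_range.mp hi))
      (Finset.nonempty_range_iff.mpr hM.ne')
  have hknot0 : knot c M 0 = 0 := by simp [knot]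
  have hknotM : knot c M M = 1 := by
    simp only [knot, totalLen] at *
    exact div_self hZ.ne'
  have hdiff : ∀ i, knot c M (i + 1) - knot c M i = propLen c M i := by
    intro i
    rw [knot, knot, div_sub_div_same, Finset.sum_range_succ, add_sub_cancel_left, propLen]
  have hlt : ∀ i < M, knot c M i < knot c M (i + 1) := by
    intro i hi
    rw [← sub_pos, hdiff]
    exact div_pos (hseg i hi) hZ
  -- the explicit quadratic on segment i
  set q : ℕ → ℝ → ℝ := fun i t =>
    (((t - knot c M i) / (knot c M (i + 1) - knot c M i)) * c (i + 1) j
      - ((t - knot c M (i + 1)) / (knot c M (i + 1) - knot c M i)) * c i j) *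
    (((t - knot c M i) / (knot c M (i + 1) - knot c M i)) * c (i + 1) k
      - ((t - knot c M (i + 1)) / (knot c M (i + 1) - knot c M i)) * c i k) with hq
  have heqn : ∀ i < M, Set.EqOn (fun t => f t j * f t k) (q i)
      (Set.uIcc (knot c M i) (knot c M (i + 1))) := by
    intro i hi t ht
    rw [Set.uIcc_of_le (hlt i hi).le] at ht
    simp only [hq]
    rw [hf i hi t ht]
    simp [PiLp.sub_apply, PiLp.smul_apply, smul_eq_mul]
  have hqc : ∀ i, Continuous (q i) := by intro i; fun_prop
  have hint : ∀ i < M, IntervalIntegrable (fun t => f t j * f t k) volume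
      (knot c M i) (knot c M (i + 1)) := by
    intro i hi
    rw [intervalIntegrable_iff]
    exact (intervalIntegrable_iff.mp ((hqc i).intervalIntegrable _ _)).congr_fun
      (fun t ht => (heqn i hi (uIoc_subset_uIcc ht)).symm) measurableSet_uIoc
  calc (∫ t in (0:ℝ)..1, f t j * f t k)
      = ∫ t in (knot c M 0)..(knot c M M), f t j * f t k := by rw [hknot0, hknotM]
    _ = ∑ i ∈ Finset.range M, ∫ t in (knot c M i)..(knot c M (i + 1)), f t j * f t k :=
        (intervalIntegral.sum_integral_adjacent_intervals hint).symm
    _ = _ := by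
        rw [Finset.mul_sum]
        refine Finset.sum_congr rfl fun i hi => ?_
        have hi' := Finset.mem_range.mp hi
        rw [intervalIntegral.integral_congr (heqn i hi')]
        have := seg_int (knot c M i) (knot c M (i + 1)) (c i j) (c i k) (c (i + 1) j)
          (c (i + 1) k) (by rw [hdiff]; exact (div_pos (hseg i hi') hZ).ne')
        rw [hq]
        simp only at this ⊢
        rw [this, hdiff]
        ring
end
end

section
/- Let c_0, …, c_M ∈ ℝ^d with c_i ≠ c_{i−1} for all i, and let C : [0,1] → ℝ^d be the associated constant-speed piecewise linear curve with proportional segment lengths p_i. Then for all indices 1 ≤ j, k, l ≤ d, the third moment of C satisfies ∫₀¹ C(t)_j C(t)_k C(t)_l dt = (1/12) Σ_{i=1}^M p_i [ (c_{i−1} + c_i)_j (c_{i−1} + c_i)_k (c_{i−1} + c_i)_l + 2 (c_{i−1})_j (c_{i−1})_k (c_{i−1})_l + 2 (c_i)_j (c_i)_k (c_i)_l ]. -/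
open MeasureTheory Filter Set
noncomputable section

lemma key_int (pj pk pl qj qk ql : ℝ) :
    ∫ u in (0:ℝ)..1, (pj + u*(qj-pj)) * (pk + u*(qk-pk)) * (pl + u*(ql-pl)) =
    (1/12) * ((pj+qj)*(pk+qk)*(pl+ql) + 2*(pj*pk*pl) + 2*(qj*qk*ql)) := by
  have h : (fun u : ℝ => (pj + u*(qj-pj)) * (pk + u*(qk-pk)) * (pl + u*(ql-pl)))
      = fun u : ℝ => ((qj-pj)*(qk-pk)*(ql-pl)) * u^3
        + ((pj*(qk-pk)*(ql-pl) + (qj-pj)*pk*(ql-pl) + (qj-pj)*(qk-pk)*pl) * u^2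
        + ((pj*pk*(ql-pl) + pj*(qk-pk)*pl + (qj-pj)*pk*pl) * u^1
        + pj*pk*pl)) := by funext u; ring
  rw [h]
  have i3 : IntervalIntegrable (fun u:ℝ => ((qj-pj)*(qk-pk)*(ql-pl)) * u^3) volume 0 1 :=
    (by fun_prop : Continuous _).intervalIntegrable _ _
  have i2 : IntervalIntegrable (fun u:ℝ => (pj*(qk-pk)*(ql-pl) + (qj-pj)*pk*(ql-pl) + (qj-pj)*(qk-pk)*pl) * u^2) volume 0 1 :=
    (by fun_prop : Continuous _).intervalIntegrable _ _
  have i1 : IntervalIntegrable (fun u:ℝ => (pj*pk*(ql-pl) + pj*(qk-pk)*pl + (qj-pj)*pk*pl) * u^1) volume 0 1 :=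
    (by fun_prop : Continuous _).intervalIntegrable _ _
  have i0 : IntervalIntegrable (fun _:ℝ => pj*pk*pl) volume 0 1 :=
    intervalIntegrable_const
  rw [intervalIntegral.integral_add i3 (i2.add (i1.add i0)),
      intervalIntegral.integral_add i2 (i1.add i0),
      intervalIntegral.integral_add i1 i0]
  simp only [intervalIntegral.integral_const_mul, integral_pow, intervalIntegral.integral_const]
  norm_num; ring

lemma integral_affine_cube (A B : ℝ) (hAB : A < B) (pj pk pl qj qk ql : ℝ) :
    (∫ t in A..B, (pj + ((t-A)/(B-A))*(qj-pj)) * (pk + ((t-A)/(B-A))*(qk-pk))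
        * (pl + ((t-A)/(B-A))*(ql-pl)))
    = (B-A) * ((1/12) * ((pj+qj)*(pk+qk)*(pl+ql) + 2*(pj*pk*pl) + 2*(qj*qk*ql))) := by
  have hh : B - A ≠ 0 := sub_ne_zero.mpr hAB.ne'
  set G : ℝ → ℝ := fun u => (pj + u*(qj-pj)) * (pk + u*(qk-pk)) * (pl + u*(ql-pl)) with hG
  have h1 : (∫ t in A..B, G ((t-A)/(B-A)))
      = ∫ t in A - A..B - A, G (t/(B-A)) :=
    intervalIntegral.integral_comp_sub_right (fun t => G (t/(B-A))) A
  have h2 : (∫ t in A - A..B - A, G (t/(B-A)))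
      = (B-A) • ∫ u in (A-A)/(B-A)..(B-A)/(B-A), G u :=
    intervalIntegral.integral_comp_div G hh
  rw [show (∫ t in A..B, (pj + ((t-A)/(B-A))*(qj-pj)) * (pk + ((t-A)/(B-A))*(qk-pk))
        * (pl + ((t-A)/(B-A))*(ql-pl))) = ∫ t in A..B, G ((t-A)/(B-A)) from rfl,
      h1, h2]
  rw [sub_self, zero_div, div_self hh, key_int, smul_eq_mul]

/-- The third moment of a constant-speed piecewise linear curve:
for all coordinates `j, k, l`,
`∫₀¹ C(t)_j C(t)_k C(t)_l dt = (1/12) Σ_{i=1}^M p_i [(c_{i−1}+c_i)_j(c_{i−1}+c_i)_k(c_{i−1}+c_i)_l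
  + 2(c_{i−1})_j(c_{i−1})_k(c_{i−1})_l + 2(c_i)_j(c_i)_k(c_i)_l]`. -/
theorem third_moment_pwl (d M : ℕ) (hM : 0 < M) (c : ℕ → EuclideanSpace ℝ (Fin d))
    (hc : ∀ i < M, c (i + 1) ≠ c i)
    (f : ℝ → EuclideanSpace ℝ (Fin d)) (hf : IsPWLOf c M f) :
    ∀ j k l : Fin d,
      (∫ t in (0:ℝ)..1, f t j * f t k * f t l)
        = (1 / 12 : ℝ) * ∑ i ∈ Finset.range M, propLen c M i *
            ((c i j + c (i + 1) j) * (c i k + c (i + 1) k) * (c i l + c (i + 1) l)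
              + 2 * (c i j * c i k * c i l)
              + 2 * (c (i + 1) j * c (i + 1) k * c (i + 1) l)) := by
  intro j k l
  have hseg : ∀ i < M, 0 < segLen c i := fun i hi => by
    simpa [segLen] using norm_pos_iff.mpr (sub_ne_zero.mpr (hc i hi))
  have hZ : 0 < totalLen c M :=
    Finset.sum_pos (fun i hi => hseg i (Finset.mem_range.mp hi))
      ⟨0, Finset.mem_range.mpr hM⟩
  set a : ℕ → ℝ := knot c M with ha
  have hknot0 : a 0 = 0 := by simp [ha, knot]
  have hknotM : a M = 1 := by
    rw [ha, show knot c M M = totalLen c M / totalLen c M from rfl, div_self hZ.ne']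
  have hgap : ∀ i, a (i+1) - a i = propLen c M i := by
    intro i
    rw [ha]
    rw [knot, knot, propLen, Finset.sum_range_succ, div_sub_div_same,
      add_sub_cancel_left]
  have hlt : ∀ i < M, a i < a (i+1) := by
    intro i hi
    have h1 : 0 < propLen c M i := div_pos (hseg i hi) hZ
    have := hgap i
    linarith
  have heq : ∀ i < M, Set.EqOn (fun t => f t j * f t k * f t l)
      (fun t => (c i j + ((t - a i)/(a (i+1) - a i)) * (c (i+1) j - c i j))
              * (c i k + ((t - a i)/(a (i+1) - a i)) * (c (i+1) k - c i k))
              * (c i l + ((t - a i)/(a (i+1) - a i)) * (c (i+1) l - c i l)))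
      (Set.uIcc (a i) (a (i+1))) := by
    intro i hi t ht
    rw [Set.uIcc_of_le (hlt i hi).le] at ht
    have hft := hf i hi t ht
    have hba : a (i+1) - a i ≠ 0 := sub_ne_zero.mpr (hlt i hi).ne'
    have h1 : ∀ m : Fin d, f t m
        = ((t - a i)/(a (i+1) - a i)) * c (i+1) m
          - ((t - a (i+1))/(a (i+1) - a i)) * c i m := by
      intro m
      rw [show f t m = (((t - knot c M i) / (knot c M (i + 1) - knot c M i)) • c (i + 1)
        - ((t - knot c M (i + 1)) / (knot c M (i + 1) - knot c M i)) • c i) m from by rw [hft]]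
      simp [PiLp.sub_apply, PiLp.smul_apply, smul_eq_mul, ha]
    simp only [h1]
    field_simp
    ring
  have hint : ∀ i < M, IntervalIntegrable (fun t => f t j * f t k * f t l)
      volume (a i) (a (i+1)) := by
    intro i hi
    have hba : a (i+1) - a i ≠ 0 := sub_ne_zero.mpr (hlt i hi).ne'
    have hcg : Continuous (fun t : ℝ =>
        (c i j + ((t - a i)/(a (i+1) - a i)) * (c (i+1) j - c i j))
        * (c i k + ((t - a i)/(a (i+1) - a i)) * (c (i+1) k - c i k))
        * (c i l + ((t - a i)/(a (i+1) - a i)) * (c (i+1) l - c i l))) := by fun_prop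
    exact (hcg.continuousOn.congr (heq i hi)).intervalIntegrable
  have hsum := intervalIntegral.sum_integral_adjacent_intervals (μ := volume)
    (f := fun t => f t j * f t k * f t l) (fun i hi => hint i hi)
  rw [hknot0, hknotM] at hsum
  rw [← hsum, Finset.mul_sum]
  refine Finset.sum_congr rfl fun i hi => ?_
  have hi' := Finset.mem_range.mp hi
  rw [intervalIntegral.integral_congr (heq i hi'),
    integral_affine_cube (a i) (a (i+1)) (hlt i hi'), hgap i]
  ring
end
end

section
/- Let M = d ≥ 4. For almost every (Lebesgue) matrix C* ∈ ℝ^{(M+1)×d} whose consecutive rows are distinct, with proportional segment lengths p* ∈ ℝ^M and m₃* = μ₃(C*, p*), the following holds: for every p ∈ ℝ^M with p ≠ p*, the directional derivative of the map p ↦ L_{m₃*}(C*, p) at p in the direction p* − p is strictly negative: (d/ds) L_{m₃*}(C*, p + s(p* − p)) |_{s=0} < 0. -/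
open MeasureTheory Filter Set
noncomputable section

set_option maxRecDepth 10000

/-- Relaxed third moment `μ₃(C, p)` of a matrix of row-stacked vertices `C` with weights `p`:
`μ₃(C,p)_{jkl} = Σ_i p_i [(1/12)(c_{i−1}+c_i)_j(c_{i−1}+c_i)_k(c_{i−1}+c_i)_l
 + (1/6)(c_{i−1})_j(c_{i−1})_k(c_{i−1})_l + (1/6)(c_i)_j(c_i)_k(c_i)_l]`. -/
def mu3 {M d : ℕ} (C : Fin (M + 1) → EuclideanSpace ℝ (Fin d)) (p : Fin M → ℝ)
    (j k l : Fin d) : ℝ :=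
  ∑ i : Fin M, p i *
    ((1 / 12) * ((C i.castSucc j + C i.succ j) * (C i.castSucc k + C i.succ k)
        * (C i.castSucc l + C i.succ l))
      + (1 / 6) * (C i.castSucc j * C i.castSucc k * C i.castSucc l)
      + (1 / 6) * (C i.succ j * C i.succ k * C i.succ l))

/-- Third moment loss `L_m(C, p) = Σ_{jkl} (μ₃(C,p)_{jkl} − m_{jkl})²`. -/
def Lloss {M d : ℕ} (m : Fin d → Fin d → Fin d → ℝ)
    (C : Fin (M + 1) → EuclideanSpace ℝ (Fin d)) (p : Fin M → ℝ) : ℝ :=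
  ∑ j : Fin d, ∑ k : Fin d, ∑ l : Fin d, (mu3 C p j k l - m j k l) ^ 2

/-- Proportional segment lengths `p_i = ‖c_i − c_{i−1}‖ / Σ_k ‖c_k − c_{k−1}‖` of a matrix of
row-stacked vertices. -/
def propSeg {M d : ℕ} (C : Fin (M + 1) → EuclideanSpace ℝ (Fin d)) (i : Fin M) : ℝ :=
  ‖C i.succ - C i.castSucc‖ / ∑ k : Fin M, ‖C k.succ - C k.castSucc‖

/- ### Auxiliary lemmas -/

/-- Evaluation of a multivariate polynomial is a measurable function of the point. -/
lemma aux_measurable_eval {σ : Type*} [Fintype σ] (p : MvPolynomial σ ℝ) :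
    Measurable fun x : σ → ℝ => MvPolynomial.eval x p := by
  have h : (fun x : σ → ℝ => MvPolynomial.eval x p)
      = fun x => ∑ d ∈ p.support, MvPolynomial.coeff d p * ∏ i ∈ d.support, x i ^ d i :=
    funext fun x => MvPolynomial.eval_eq x p
  rw [h]
  exact Finset.measurable_sum _ fun d _ =>
    (Finset.measurable_prod _ fun i _ => (measurable_pi_apply i).pow_const _).const_mul _

/-- The zero set of a nonzero multivariate polynomial over `ℝ` (variables `Fin n`) is
Lebesgue-null. -/
lemma aux_poly_null (n : ℕ) : ∀ (p : MvPolynomial (Fin n) ℝ), p ≠ 0 →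
    volume {x : Fin n → ℝ | MvPolynomial.eval x p = 0} = 0 := by
  induction n with
  | zero =>
    intro p hp
    obtain ⟨a, rfl⟩ := MvPolynomial.C_surjective (Fin 0) p
    have ha : a ≠ 0 := fun h => hp (by rw [h, map_zero])
    have h : {x : Fin 0 → ℝ | MvPolynomial.eval x (MvPolynomial.C a) = 0} = ∅ := by
      ext x; simpa using ha
    rw [h]; exact measure_empty
  | succ n IH =>
    intro p hp
    set q : Polynomial (MvPolynomial (Fin n) ℝ) := MvPolynomial.finSuccEquiv ℝ n p with hq_def
    have hq : q ≠ 0 := by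
      rw [hq_def, Ne, EmbeddingLike.map_eq_zero_iff]
      exact hp
    have hlc : q.leadingCoeff ≠ 0 := Polynomial.leadingCoeff_ne_zero.mpr hq
    have hIH := IH q.leadingCoeff hlc
    set S : Set ((Fin n → ℝ) × ℝ) :=
      {z | Polynomial.eval z.2 (Polynomial.map (MvPolynomial.eval z.1) q) = 0} with hS_def
    have hfun : (fun z : (Fin n → ℝ) × ℝ =>
        Polynomial.eval z.2 (Polynomial.map (MvPolynomial.eval z.1) q))
        = fun z => ∑ k ∈ Finset.range (q.natDegree + 1),
            MvPolynomial.eval z.1 (q.coeff k) * z.2 ^ k := by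
      funext z
      rw [Polynomial.eval_eq_sum_range'
        (lt_of_le_of_lt Polynomial.natDegree_map_le (Nat.lt_succ_self _))]
      simp [Polynomial.coeff_map]
    have hgm : Measurable (fun z : (Fin n → ℝ) × ℝ =>
        Polynomial.eval z.2 (Polynomial.map (MvPolynomial.eval z.1) q)) := by
      rw [hfun]
      exact Finset.measurable_sum _ fun k _ =>
        ((aux_measurable_eval _).comp measurable_fst).mul (measurable_snd.pow_const k)
    have hmeas : MeasurableSet S := hgm (measurableSet_singleton 0)
    have hslice : ∀ᵐ y : Fin n → ℝ, volume (Prod.mk y ⁻¹' S) = 0 := by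
      have h0 : ∀ᵐ y : Fin n → ℝ, MvPolynomial.eval y q.leadingCoeff ≠ 0 := by
        rw [ae_iff]
        simpa using hIH
      filter_upwards [h0] with y hy
      have hqy : Polynomial.map (MvPolynomial.eval y) q ≠ 0 := by
        intro h
        apply hy
        rw [Polynomial.leadingCoeff, ← Polynomial.coeff_map (MvPolynomial.eval y), h,
          Polynomial.coeff_zero]
      have hsub : Prod.mk y ⁻¹' S
          ⊆ {t : ℝ | (Polynomial.map (MvPolynomial.eval y) q).IsRoot t} := fun t ht => ht
      exact ((Polynomial.finite_setOf_isRoot hqy).subset hsub).measure_zero _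
    have hSnull : ((volume : Measure (Fin n → ℝ)).prod (volume : Measure ℝ)) S = 0 := by
      rw [Measure.measure_prod_null hmeas]
      exact hslice
    have hT : MeasurePreserving (fun x : Fin (n+1) → ℝ => (Fin.tail x, x 0))
        (volume) ((volume : Measure (Fin n → ℝ)).prod (volume : Measure ℝ)) := by
      have h1 := measurePreserving_piFinSuccAbove (fun _ : Fin (n+1) => (volume : Measure ℝ)) 0
      have h2 := Measure.measurePreserving_swap (μ := (volume : Measure ℝ))
        (ν := Measure.pi fun _ : Fin n => (volume : Measure ℝ))
      have h3 := h2.comp h1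
      have hkey : (Prod.swap ∘ ⇑(MeasurableEquiv.piFinSuccAbove (fun _ : Fin (n+1) => ℝ) 0))
          = fun x : Fin (n+1) → ℝ => (Fin.tail x, x 0) := by
        funext x
        show ((Fin.insertNthEquiv (fun _ => ℝ) 0).symm x).swap = (Fin.tail x, x 0)
        simp [Fin.insertNthEquiv, Fin.removeNth_zero]
      rw [hkey] at h3
      rw [volume_pi]
      exact h3
    have hset : {x : Fin (n+1) → ℝ | MvPolynomial.eval x p = 0}
        = (fun x : Fin (n+1) → ℝ => (Fin.tail x, x 0)) ⁻¹' S := by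
      ext x
      have hkey : MvPolynomial.eval x p
          = Polynomial.eval (x 0) (Polynomial.map (MvPolynomial.eval (Fin.tail x)) q) := by
        conv_lhs => rw [← Fin.cons_self_tail x]
        exact MvPolynomial.eval_eq_eval_mv_eval' (Fin.tail x) (x 0) p
      simp only [hS_def, Set.mem_setOf_eq, Set.mem_preimage, hkey]
    rw [hset, hT.measure_preimage hmeas.nullMeasurableSet, hSnull]

/-- The zero set of a nonzero multivariate polynomial over `ℝ` (any finite variable type) is
Lebesgue-null. -/
lemma aux_poly_null' {σ : Type*} [Fintype σ] (p : MvPolynomial σ ℝ) (hp : p ≠ 0) :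
    volume {x : σ → ℝ | MvPolynomial.eval x p = 0} = 0 := by
  classical
  set n := Fintype.card σ
  set e : σ ≃ Fin n := Fintype.equivFin σ
  set W := MeasurableEquiv.arrowCongr' e (MeasurableEquiv.refl ℝ)
  have hW : MeasurePreserving W volume volume :=
    volume_preserving_arrowCongr' e (MeasurableEquiv.refl ℝ) (MeasurePreserving.id _)
  have hq : MvPolynomial.rename e p ≠ 0 := fun h =>
    hp ((MvPolynomial.rename_injective e e.injective).eq_iff.mp (by simpa using h))
  have heval : ∀ x : σ → ℝ, MvPolynomial.eval (W x) (MvPolynomial.rename e p)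
      = MvPolynomial.eval x p := by
    intro x
    rw [MvPolynomial.eval_rename]
    have hx : (W x) ∘ ⇑e = x := by
      funext s
      simp [W, MeasurableEquiv.arrowCongr', Equiv.arrowCongr', Equiv.arrowCongr]
    rw [hx]
  have hmeas : MeasurableSet {y : Fin n → ℝ | MvPolynomial.eval y (MvPolynomial.rename e p) = 0} :=
    (aux_measurable_eval _) (measurableSet_singleton 0)
  have hset : {x : σ → ℝ | MvPolynomial.eval x p = 0}
      = W ⁻¹' {y : Fin n → ℝ | MvPolynomial.eval y (MvPolynomial.rename e p) = 0} := by
    ext x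
    simp only [Set.mem_setOf_eq, Set.mem_preimage, heval]
  rw [hset, hW.measure_preimage hmeas.nullMeasurableSet]
  exact aux_poly_null n _ hq

/-- Uncurrying is measure preserving. -/
lemma aux_uncurry_mp (a b : Type*) [Fintype a] [Fintype b] :
    MeasurePreserving (fun (C : a → b → ℝ) (s : a × b) => C s.1 s.2) volume volume := by
  have hmeas : Measurable (fun (C : a → b → ℝ) (s : a × b) => C s.1 s.2) :=
    measurable_pi_lambda _ fun s => (measurable_pi_apply s.2).comp (measurable_pi_apply s.1)
  refine ⟨hmeas, ?_⟩
  rw [volume_pi]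
  refine (Measure.pi_eq fun s hs => ?_).symm
  rw [Measure.map_apply hmeas (MeasurableSet.univ_pi hs)]
  have hpre : (fun (C : a → b → ℝ) (s : a × b) => C s.1 s.2) ⁻¹' Set.univ.pi s
      = Set.univ.pi fun k : a => Set.univ.pi fun i : b => s (k, i) := by
    ext C
    simp only [Set.mem_preimage, Set.mem_pi, Set.mem_univ, true_implies]
    exact ⟨fun h k i => h (k, i), fun h s => h s.1 s.2⟩
  rw [hpre, Measure.pi_pi, Fintype.prod_prod_type]
  exact Finset.prod_congr rfl fun k _ => by rw [volume_pi, Measure.pi_pi]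

/-- Let `M = d ≥ 4`. For almost every `C*` with consecutive rows distinct,
with proportional segment lengths `p*` and `m₃* = μ₃(C*, p*)`: for every `p ≠ p*`, the
directional derivative of `p ↦ L_{m₃*}(C*, p)` at `p` in the direction `p* − p` is strictly
negative. -/
theorem recovery_p_from_Cstar_wellposed (d : ℕ) (hd : 4 ≤ d) (M : ℕ) (hMd : M = d) :
    ∀ᵐ Cstar : Fin (M + 1) → EuclideanSpace ℝ (Fin d) ∂volume,
      (∀ i : Fin M, Cstar i.succ ≠ Cstar i.castSucc) →
      ∀ p : Fin M → ℝ, p ≠ propSeg Cstar →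
        deriv (fun s : ℝ =>
            Lloss (mu3 Cstar (propSeg Cstar)) Cstar
              (fun i => p i + s * (propSeg Cstar i - p i))) 0 < 0 := by
  subst hMd
  classical
  -- The diagonal coefficient matrix of the linear map `w ↦ μ₃(C, w)_{jjj}`.
  set Bm : (Fin (M+1) → EuclideanSpace ℝ (Fin M)) → Matrix (Fin M) (Fin M) ℝ :=
    fun Cs j i =>
      (1 / 12) * ((Cs i.castSucc j + Cs i.succ j) * (Cs i.castSucc j + Cs i.succ j)
          * (Cs i.castSucc j + Cs i.succ j))
        + (1 / 6) * (Cs i.castSucc j * Cs i.castSucc j * Cs i.castSucc j)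
        + (1 / 6) * (Cs i.succ j * Cs i.succ j * Cs i.succ j) with hBm_def
  -- A polynomial representation of its determinant.
  set X : Fin (M+1) × Fin M → MvPolynomial (Fin (M+1) × Fin M) ℝ := MvPolynomial.X with hX_def
  set Pm : Matrix (Fin M) (Fin M) (MvPolynomial (Fin (M+1) × Fin M) ℝ) :=
    fun j i =>
      MvPolynomial.C (1 / 12 : ℝ) * ((X (i.castSucc, j) + X (i.succ, j))
          * (X (i.castSucc, j) + X (i.succ, j)) * (X (i.castSucc, j) + X (i.succ, j)))
        + MvPolynomial.C (1 / 6 : ℝ) * (X (i.castSucc, j) * X (i.castSucc, j) * X (i.castSucc, j))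
        + MvPolynomial.C (1 / 6 : ℝ) * (X (i.succ, j) * X (i.succ, j) * X (i.succ, j))
    with hPm_def
  have hdet_eval : ∀ x : Fin (M+1) × Fin M → ℝ,
      MvPolynomial.eval x Pm.det
        = Matrix.det (fun j i : Fin M =>
            (1 / 12) * ((x (i.castSucc, j) + x (i.succ, j)) * (x (i.castSucc, j) + x (i.succ, j))
                * (x (i.castSucc, j) + x (i.succ, j)))
              + (1 / 6) * (x (i.castSucc, j) * x (i.castSucc, j) * x (i.castSucc, j))
              + (1 / 6) * (x (i.succ, j) * x (i.succ, j) * x (i.succ, j))) := by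
    intro x
    rw [RingHom.map_det]
    congr 1
    funext j i
    rw [RingHom.mapMatrix_apply, Matrix.map_apply]
    simp [Pm, X, RingHom.mapMatrix_apply, Matrix.map_apply]
  -- The determinant polynomial is not identically zero.
  have hP : Pm.det ≠ 0 := by
    intro h
    set x₀ : Fin (M+1) × Fin M → ℝ :=
      fun s => if (s.1 : ℕ) = (s.2 : ℕ) + 1 then (1 : ℝ) else 0 with hx0_def
    have h0 := congrArg (MvPolynomial.eval x₀) h
    rw [map_zero, hdet_eval] at h0
    set E : Matrix (Fin M) (Fin M) ℝ :=
      fun j i =>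
        (1 / 12) * ((x₀ (i.castSucc, j) + x₀ (i.succ, j)) * (x₀ (i.castSucc, j) + x₀ (i.succ, j))
            * (x₀ (i.castSucc, j) + x₀ (i.succ, j)))
          + (1 / 6) * (x₀ (i.castSucc, j) * x₀ (i.castSucc, j) * x₀ (i.castSucc, j))
          + (1 / 6) * (x₀ (i.succ, j) * x₀ (i.succ, j) * x₀ (i.succ, j)) with hE_def
    have hE : ∀ j i : Fin M, E j i =
        if (i : ℕ) = (j : ℕ) then (1/4 : ℝ) else if (i : ℕ) = (j : ℕ) + 1 then (1/4 : ℝ) else 0 := by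
      intro j i
      have hc : x₀ (i.castSucc, j) = if (i : ℕ) = (j : ℕ) + 1 then (1 : ℝ) else 0 := by
        simp [hx0_def, Fin.coe_castSucc]
      have hs : x₀ (i.succ, j) = if (i : ℕ) = (j : ℕ) then (1 : ℝ) else 0 := by
        rw [hx0_def]
        simp only [Fin.val_succ]
        congr 1
        simp [Nat.add_right_cancel_iff]
      rw [hE_def]
      simp only [hc, hs]
      by_cases h1 : (i : ℕ) = (j : ℕ) <;> by_cases h2 : (i : ℕ) = (j : ℕ) + 1
      · omega
      · norm_num [h1, h2]
      · norm_num [h1, h2]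
      · norm_num [h1, h2]
    have htri : E.BlockTriangular id := by
      intro j i hij
      have hval : (i : ℕ) < (j : ℕ) := hij
      have h1 : (i : ℕ) ≠ (j : ℕ) := by omega
      have h2 : (i : ℕ) ≠ (j : ℕ) + 1 := by omega
      rw [hE j i, if_neg h1, if_neg h2]
    have hdetE : E.det = (1/4 : ℝ) ^ M := by
      rw [Matrix.det_of_upperTriangular htri]
      have : ∀ j : Fin M, E j j = (1/4 : ℝ) := by
        intro j; rw [hE j j, if_pos rfl]
      simp [this]
    rw [hdetE] at h0
    have : (1/4 : ℝ) ^ M ≠ 0 := by positivity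
    exact this h0
  -- The coordinate map is measure preserving.
  have hΦ : MeasurePreserving
      (fun (Cs : Fin (M+1) → EuclideanSpace ℝ (Fin M)) (s : Fin (M+1) × Fin M) => Cs s.1 s.2)
      volume volume := by
    have h1 : MeasurePreserving
        (fun (Cs : Fin (M+1) → EuclideanSpace ℝ (Fin M)) (k : Fin (M+1)) =>
          (MeasurableEquiv.toLp 2 (Fin M → ℝ)).symm (Cs k)) volume volume :=
      volume_preserving_pi fun _ => EuclideanSpace.volume_preserving_symm_measurableEquiv_toLp (Fin M)
    exact (aux_uncurry_mp (Fin (M+1)) (Fin M)).comp h1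
  -- Almost everywhere, the coefficient matrix has nonzero determinant.
  have hnull : volume {Cs : Fin (M+1) → EuclideanSpace ℝ (Fin M) | (Bm Cs).det = 0} = 0 := by
    have hmeasset : MeasurableSet {x : Fin (M+1) × Fin M → ℝ | MvPolynomial.eval x Pm.det = 0} :=
      (aux_measurable_eval _) (measurableSet_singleton 0)
    have hset : {Cs : Fin (M+1) → EuclideanSpace ℝ (Fin M) | (Bm Cs).det = 0}
        = (fun (Cs : Fin (M+1) → EuclideanSpace ℝ (Fin M)) (s : Fin (M+1) × Fin M) => Cs s.1 s.2)
          ⁻¹' {x | MvPolynomial.eval x Pm.det = 0} := by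
      ext Cs
      simp only [Set.mem_setOf_eq, Set.mem_preimage]
      rw [hdet_eval]
    rw [hset, hΦ.measure_preimage hmeasset.nullMeasurableSet]
    exact aux_poly_null' _ hP
  have hae : ∀ᵐ Cs : Fin (M+1) → EuclideanSpace ℝ (Fin M) ∂volume, (Bm Cs).det ≠ 0 := by
    rw [ae_iff]
    simpa using hnull
  filter_upwards [hae] with Cs hdet _hdist p hp
  set ps := propSeg Cs with hps_def
  set Δ : Fin M → Fin M → Fin M → ℝ := fun j k l => mu3 Cs ps j k l - mu3 Cs p j k l with hΔ_def
  set K : ℝ := ∑ j : Fin M, ∑ k : Fin M, ∑ l : Fin M, (Δ j k l) ^ 2 with hK_def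
  -- The loss along the segment is `(1-s)² K`.
  have hfun : (fun s : ℝ => Lloss (mu3 Cs ps) Cs (fun i => p i + s * (ps i - p i)))
      = fun s => (1 - s) ^ 2 * K := by
    funext s
    rw [hK_def, Finset.mul_sum]
    unfold Lloss
    refine Finset.sum_congr rfl fun j _ => ?_
    rw [Finset.mul_sum]
    refine Finset.sum_congr rfl fun k _ => ?_
    rw [Finset.mul_sum]
    refine Finset.sum_congr rfl fun l _ => ?_
    have hlin : mu3 Cs (fun i => p i + s * (ps i - p i)) j k l
        = mu3 Cs p j k l + s * (mu3 Cs ps j k l - mu3 Cs p j k l) := by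
      simp only [mu3]
      rw [← Finset.sum_sub_distrib, Finset.mul_sum, ← Finset.sum_add_distrib]
      refine Finset.sum_congr rfl fun i _ => ?_
      ring
    rw [hlin, hΔ_def]
    ring
  -- `K > 0` because the diagonal coefficient matrix is nonsingular.
  have hw : (fun i : Fin M => ps i - p i) ≠ 0 := by
    intro h
    apply hp
    funext i
    have h2 := congrFun h i
    simp only [Pi.zero_apply] at h2
    rw [hps_def] at h2 ⊢
    linarith
  have hmv : (Bm Cs).mulVec (fun i => ps i - p i) ≠ 0 :=
    fun h => hw (Matrix.eq_zero_of_mulVec_eq_zero hdet h)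
  obtain ⟨j, hj⟩ := Function.ne_iff.mp hmv
  have hΔj : Δ j j j = (Bm Cs).mulVec (fun i => ps i - p i) j := by
    simp only [hΔ_def, mu3, Matrix.mulVec, dotProduct, hBm_def]
    rw [← Finset.sum_sub_distrib]
    refine Finset.sum_congr rfl fun i _ => ?_
    ring
  have hne : Δ j j j ≠ 0 := by
    rw [hΔj]
    simpa using hj
  have hpos : 0 < (Δ j j j) ^ 2 :=
    lt_of_le_of_ne (sq_nonneg _) (Ne.symm (pow_ne_zero 2 hne))
  have s1 : (Δ j j j) ^ 2 ≤ ∑ l : Fin M, (Δ j j l) ^ 2 :=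
    Finset.single_le_sum (f := fun l => (Δ j j l) ^ 2) (fun l _ => sq_nonneg _) (Finset.mem_univ j)
  have s2 : ∑ l : Fin M, (Δ j j l) ^ 2 ≤ ∑ k : Fin M, ∑ l : Fin M, (Δ j k l) ^ 2 :=
    Finset.single_le_sum (f := fun k => ∑ l : Fin M, (Δ j k l) ^ 2)
      (fun k _ => Finset.sum_nonneg fun l _ => sq_nonneg _) (Finset.mem_univ j)
  have s3 : ∑ k : Fin M, ∑ l : Fin M, (Δ j k l) ^ 2 ≤ K := by
    rw [hK_def]
    exact Finset.single_le_sum (f := fun j => ∑ k : Fin M, ∑ l : Fin M, (Δ j k l) ^ 2)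
      (fun j _ => Finset.sum_nonneg fun _ _ => Finset.sum_nonneg fun _ _ => sq_nonneg _)
      (Finset.mem_univ j)
  have hK : 0 < K := lt_of_lt_of_le hpos (le_trans s1 (le_trans s2 s3))
  -- Compute the derivative.
  have hder : HasDerivAt (fun s : ℝ => (1 - s) ^ 2 * K)
      ((2 * (1 - (0:ℝ)) ^ (2 - 1) * (-1)) * K) 0 :=
    (((hasDerivAt_id (0:ℝ)).const_sub 1).pow 2).mul_const K
  rw [hfun, hder.deriv]
  norm_num
  exact hK
end
end

section
/- Let C : [0,1] → ℝ^d be a continuous curve with ∫₀¹ C(t) dt = 0 and ‖C(t)‖ ≤ 1 for all t ∈ [0,1], and let σ > 0. Then for all x ∈ ℝ^d, p_{C,σ}(x) ≥ φ_σ(x) · exp(−1/(2σ²)). -/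
open MeasureTheory Filter Set
noncomputable section

/-- Density `φ_σ` of the isotropic Gaussian `N(0, σ²I_d)` on `ℝ^d`. -/
def gaussDens (d : ℕ) (σ : ℝ) (x : EuclideanSpace ℝ (Fin d)) : ℝ :=
  (2 * Real.pi * σ ^ 2) ^ (-(d : ℝ) / 2) * Real.exp (-‖x‖ ^ 2 / (2 * σ ^ 2))

/-- Density `p_{C,σ}(x) = ∫₀¹ φ_σ(x − C(t)) dt` of the noisy curve distribution, i.e. the law
of `C(τ) + σξ` with `τ` uniform on `[0,1]` and `ξ ~ N(0, I_d)` independent of `τ`. -/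
def noisyDens {d : ℕ} (C : ℝ → EuclideanSpace ℝ (Fin d)) (σ : ℝ)
    (x : EuclideanSpace ℝ (Fin d)) : ℝ :=
  ∫ t in (0:ℝ)..1, gaussDens d σ (x - C t)

/-- Lower bound on the noisy curve density: for a mean-zero curve bounded
by 1 in norm, `p_{C,σ}(x) ≥ φ_σ(x) exp(−1/(2σ²))`. -/
theorem noisy_density_lower_bound (d : ℕ) (C : ℝ → EuclideanSpace ℝ (Fin d))
    (hCc : Continuous C) (hC0 : (∫ t in (0:ℝ)..1, C t) = 0)
    (hCb : ∀ t ∈ Set.Icc (0:ℝ) 1, ‖C t‖ ≤ 1) (σ : ℝ) (hσ : 0 < σ) :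
    ∀ x : EuclideanSpace ℝ (Fin d),
      gaussDens d σ x * Real.exp (-1 / (2 * σ ^ 2)) ≤ noisyDens C σ x := by
  intro x
  have hσ2 : (0:ℝ) < 2 * σ ^ 2 := by positivity
  set K : ℝ := (2 * Real.pi * σ ^ 2) ^ (-(d : ℝ) / 2) with hK
  have hKpos : 0 < K := by
    apply Real.rpow_pos_of_pos
    positivity
  set A : ℝ := gaussDens d σ x * Real.exp (-1 / (2 * σ ^ 2)) with hA
  have hApos : 0 < A := by
    apply mul_pos _ (Real.exp_pos _)
    exact mul_pos hKpos (Real.exp_pos _)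
  -- pointwise bound
  have hpt : ∀ t ∈ Set.Icc (0:ℝ) 1,
      A * (1 + inner ℝ x (C t) / σ ^ 2) ≤ gaussDens d σ (x - C t) := by
    intro t ht
    have hb := hCb t ht
    have hnsq : ‖x - C t‖ ^ 2 = ‖x‖ ^ 2 - 2 * inner ℝ x (C t) + ‖C t‖ ^ 2 :=
      norm_sub_sq_real x (C t)
    set y : ℝ := inner ℝ x (C t) / σ ^ 2 with hy
    have hexp : -‖x - C t‖ ^ 2 / (2 * σ ^ 2)
        = -‖x‖ ^ 2 / (2 * σ ^ 2) + (-‖C t‖ ^ 2 / (2 * σ ^ 2)) + y := by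
      rw [hnsq, hy]; field_simp; ring
    have key : Real.exp (-1 / (2 * σ ^ 2)) * (1 + y)
        ≤ Real.exp (-‖C t‖ ^ 2 / (2 * σ ^ 2)) * Real.exp y := by
      calc Real.exp (-1 / (2 * σ ^ 2)) * (1 + y)
          ≤ Real.exp (-1 / (2 * σ ^ 2)) * Real.exp y :=
            mul_le_mul_of_nonneg_left (by linarith [Real.add_one_le_exp y]) (Real.exp_pos _).le
        _ ≤ Real.exp (-‖C t‖ ^ 2 / (2 * σ ^ 2)) * Real.exp y := by
            apply mul_le_mul_of_nonneg_right _ (Real.exp_pos _).le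
            apply Real.exp_le_exp.2
            apply div_le_div_of_nonneg_right _ hσ2.le
            have : ‖C t‖ ^ 2 ≤ 1 := by
              nlinarith [norm_nonneg (C t)]
            linarith
    have : A * (1 + y)
        = K * Real.exp (-‖x‖ ^ 2 / (2 * σ ^ 2)) * (Real.exp (-1 / (2 * σ ^ 2)) * (1 + y)) := by
      rw [hA, gaussDens]; ring
    rw [this, gaussDens, hexp, Real.exp_add, Real.exp_add]
    have hpos : (0:ℝ) ≤ K * Real.exp (-‖x‖ ^ 2 / (2 * σ ^ 2)) := by positivity
    calc K * Real.exp (-‖x‖ ^ 2 / (2 * σ ^ 2)) * (Real.exp (-1 / (2 * σ ^ 2)) * (1 + y))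
        ≤ K * Real.exp (-‖x‖ ^ 2 / (2 * σ ^ 2))
            * (Real.exp (-‖C t‖ ^ 2 / (2 * σ ^ 2)) * Real.exp y) :=
          mul_le_mul_of_nonneg_left key hpos
      _ = K * (Real.exp (-‖x‖ ^ 2 / (2 * σ ^ 2))
            * Real.exp (-‖C t‖ ^ 2 / (2 * σ ^ 2)) * Real.exp y) := by ring
  -- integrability
  have hcont1 : Continuous fun t => gaussDens d σ (x - C t) := by
    unfold gaussDens
    fun_prop
  have hcont2 : Continuous fun t => A * (1 + (inner ℝ x (C t) : ℝ) / σ ^ 2) := by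
    have : Continuous fun t => (inner ℝ x (C t) : ℝ) :=
      (continuous_const.inner hCc)
    fun_prop
  have hmono : (∫ t in (0:ℝ)..1, A * (1 + (inner ℝ x (C t) : ℝ) / σ ^ 2))
      ≤ ∫ t in (0:ℝ)..1, gaussDens d σ (x - C t) := by
    apply intervalIntegral.integral_mono_on zero_le_one
      (hcont2.intervalIntegrable 0 1) (hcont1.intervalIntegrable 0 1)
    intro t ht; exact hpt t ht
  -- compute the left integral
  have hinner : (∫ t in (0:ℝ)..1, (inner ℝ x (C t) : ℝ)) = 0 := by
    have hCi : IntervalIntegrable C MeasureTheory.volume 0 1 := hCc.intervalIntegrable 0 1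
    have h := (innerSL ℝ x).intervalIntegral_comp_comm hCi (a := 0) (b := 1)
    simp only [innerSL_apply_apply] at h
    calc (∫ t in (0:ℝ)..1, (inner ℝ x (C t) : ℝ)) = inner ℝ x (∫ t in (0:ℝ)..1, C t) := h
      _ = 0 := by rw [hC0]; exact inner_zero_right x
  have hcalc : (∫ t in (0:ℝ)..1, A * (1 + (inner ℝ x (C t) : ℝ) / σ ^ 2)) = A := by
    have hi : IntervalIntegrable (fun t => (inner ℝ x (C t) : ℝ)) volume 0 1 :=
      ((continuous_const.inner hCc)).intervalIntegrable 0 1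
    have : (fun t => A * (1 + (inner ℝ x (C t) : ℝ) / σ ^ 2))
        = fun t => A + (A / σ ^ 2) * (inner ℝ x (C t) : ℝ) := by
      funext t; field_simp
    rw [this, intervalIntegral.integral_add (intervalIntegrable_const)
      (hi.const_mul _), intervalIntegral.integral_const,
      intervalIntegral.integral_const_mul, hinner]
    simp
  calc A ≤ ∫ t in (0:ℝ)..1, gaussDens d σ (x - C t) := hcalc ▸ hmono
    _ = noisyDens C σ x := rfl
end
end

section
/- Let C, Γ : [0,1] → ℝ^d be continuous curves with ‖C(t) − Γ(t)‖ ≤ 1/3 and ‖C(t)‖, ‖Γ(t)‖ ≤ 1 for all t ∈ [0,1], and let k ≥ 1. Then Σ_{j_1, …, j_k = 1}^d ( ∫₀¹ C(t)_{j_1} ⋯ C(t)_{j_k} dt − ∫₀¹ Γ(t)_{j_1} ⋯ Γ(t)_{j_k} dt )² ≤ 12 · 2^k · ∫₀¹ ‖C(t) − Γ(t)‖² dt. -/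
open MeasureTheory Filter Set
noncomputable section

lemma sum_cons_decomp' {d k : ℕ} (F : (Fin (k+1) → Fin d) → ℝ) :
    ∑ j : Fin (k+1) → Fin d, F j
      = ∑ i : Fin d, ∑ j : Fin k → Fin d, F (Fin.cons i j) := by
  have h := Fintype.sum_equiv (Fin.consEquiv fun _ => Fin d)
    (fun p : Fin d × (Fin k → Fin d) => F (Fin.cons p.1 p.2)) F (fun p => rfl)
  rw [← h, Fintype.sum_prod_type]

lemma sum_prod_eq' {d : ℕ} (k : ℕ) (g : Fin d → ℝ) :
    ∑ j : Fin k → Fin d, ∏ a, g (j a) = (∑ i, g i) ^ k := by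
  induction k with
  | zero => simp
  | succ k ih =>
    rw [sum_cons_decomp']
    simp only [Fin.prod_univ_succ, Fin.cons_zero, Fin.cons_succ]
    simp only [← Finset.mul_sum, ih, ← Finset.sum_mul]
    ring

lemma sqrt_sum_add_sq_le' {ι : Type*} [Fintype ι] (u v : ι → ℝ) :
    Real.sqrt (∑ i, (u i + v i) ^ 2)
      ≤ Real.sqrt (∑ i, u i ^ 2) + Real.sqrt (∑ i, v i ^ 2) := by
  have := norm_add_le ((WithLp.equiv 2 (ι → ℝ)).symm u) ((WithLp.equiv 2 (ι → ℝ)).symm v)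
  simpa [EuclideanSpace.norm_eq, Real.norm_eq_abs, sq_abs] using this

lemma key_sqrt' {d : ℕ} (k : ℕ) (x y : Fin d → ℝ)
    (hx : ∑ i, x i ^ 2 ≤ 1) (hy : ∑ i, y i ^ 2 ≤ 1) :
    Real.sqrt (∑ j : Fin k → Fin d, ((∏ a, x (j a)) - ∏ a, y (j a)) ^ 2)
      ≤ k * Real.sqrt (∑ i, (x i - y i) ^ 2) := by
  induction k with
  | zero => simp
  | succ k ih =>
    set E := ∑ i, (x i - y i) ^ 2 with hE
    have hE0 : 0 ≤ E := Finset.sum_nonneg fun i _ => sq_nonneg _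
    set A := ∑ j : Fin k → Fin d, ((∏ a, x (j a)) - ∏ a, y (j a)) ^ 2 with hA
    have hA0 : 0 ≤ A := Finset.sum_nonneg fun j _ => sq_nonneg _
    have hx0 : (0:ℝ) ≤ ∑ i, x i ^ 2 := Finset.sum_nonneg fun i _ => sq_nonneg _
    have hdec : ∑ j : Fin (k+1) → Fin d, ((∏ a, x (j a)) - ∏ a, y (j a)) ^ 2
        = ∑ p : Fin d × (Fin k → Fin d),
            ((x p.1 * ((∏ a, x (p.2 a)) - ∏ a, y (p.2 a)))
              + ((x p.1 - y p.1) * ∏ a, y (p.2 a))) ^ 2 := by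
      rw [sum_cons_decomp', Fintype.sum_prod_type]
      refine Finset.sum_congr rfl fun i _ => Finset.sum_congr rfl fun j _ => ?_
      simp only [Fin.prod_univ_succ, Fin.cons_zero, Fin.cons_succ]
      ring_nf
    rw [hdec]
    have tri := sqrt_sum_add_sq_le'
      (fun p : Fin d × (Fin k → Fin d) => x p.1 * ((∏ a, x (p.2 a)) - ∏ a, y (p.2 a)))
      (fun p : Fin d × (Fin k → Fin d) => (x p.1 - y p.1) * ∏ a, y (p.2 a))
    refine tri.trans ?_
    have hu : ∑ p : Fin d × (Fin k → Fin d),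
        (x p.1 * ((∏ a, x (p.2 a)) - ∏ a, y (p.2 a))) ^ 2 = (∑ i, x i ^ 2) * A := by
      rw [Fintype.sum_prod_type]
      simp only [mul_pow, ← Finset.mul_sum]
      rw [← Finset.sum_mul]
    have hv : ∑ p : Fin d × (Fin k → Fin d),
        ((x p.1 - y p.1) * ∏ a, y (p.2 a)) ^ 2 = E * (∑ i, y i ^ 2) ^ k := by
      rw [Fintype.sum_prod_type]
      simp only [mul_pow, ← Finset.mul_sum]
      rw [← Finset.sum_mul]
      congr 1
      rw [← sum_prod_eq' k (fun i => y i ^ 2)]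
      exact Finset.sum_congr rfl fun j _ => by rw [← Finset.prod_pow]
    rw [hu, hv]
    have h1 : Real.sqrt ((∑ i, x i ^ 2) * A) ≤ Real.sqrt A := by
      apply Real.sqrt_le_sqrt; nlinarith
    have h2 : Real.sqrt (E * (∑ i, y i ^ 2) ^ k) ≤ Real.sqrt E := by
      apply Real.sqrt_le_sqrt
      have : (∑ i, y i ^ 2) ^ k ≤ 1 :=
        pow_le_one₀ (Finset.sum_nonneg fun i _ => sq_nonneg _) hy
      nlinarith
    calc _ ≤ Real.sqrt A + Real.sqrt E := add_le_add h1 h2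
    _ ≤ k * Real.sqrt E + Real.sqrt E := add_le_add ih le_rfl
    _ = (k + 1 : ℕ) * Real.sqrt E := by push_cast; ring

lemma key_sq' {d : ℕ} (k : ℕ) (x y : Fin d → ℝ)
    (hx : ∑ i, x i ^ 2 ≤ 1) (hy : ∑ i, y i ^ 2 ≤ 1) :
    ∑ j : Fin k → Fin d, ((∏ a, x (j a)) - ∏ a, y (j a)) ^ 2
      ≤ (k:ℝ) ^ 2 * ∑ i, (x i - y i) ^ 2 := by
  have hL0 : (0:ℝ) ≤ ∑ j : Fin k → Fin d, ((∏ a, x (j a)) - ∏ a, y (j a)) ^ 2 :=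
    Finset.sum_nonneg fun j _ => sq_nonneg _
  have hE0 : (0:ℝ) ≤ ∑ i, (x i - y i) ^ 2 := Finset.sum_nonneg fun i _ => sq_nonneg _
  calc ∑ j : Fin k → Fin d, ((∏ a, x (j a)) - ∏ a, y (j a)) ^ 2
      = Real.sqrt (∑ j : Fin k → Fin d, ((∏ a, x (j a)) - ∏ a, y (j a)) ^ 2) ^ 2 :=
        (Real.sq_sqrt hL0).symm
    _ ≤ ((k:ℝ) * Real.sqrt (∑ i, (x i - y i) ^ 2)) ^ 2 :=
        pow_le_pow_left₀ (Real.sqrt_nonneg _) (key_sqrt' k x y hx hy) 2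
    _ = (k:ℝ) ^ 2 * ∑ i, (x i - y i) ^ 2 := by rw [mul_pow, Real.sq_sqrt hE0]

lemma sq_intervalIntegral_le' (h : ℝ → ℝ) (hcon : Continuous h) :
    (∫ t in (0:ℝ)..1, h t) ^ 2 ≤ ∫ t in (0:ℝ)..1, h t ^ 2 := by
  set c := ∫ t in (0:ℝ)..1, h t with hc'
  have hi : IntervalIntegrable h volume 0 1 := hcon.intervalIntegrable 0 1
  have hi2 : IntervalIntegrable (fun t => h t ^ 2) volume 0 1 :=
    (hcon.pow 2).intervalIntegrable 0 1
  have h0 : 0 ≤ ∫ t in (0:ℝ)..1, (h t - c) ^ 2 :=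
    intervalIntegral.integral_nonneg (by norm_num) fun t _ => sq_nonneg _
  have hexp : ∫ t in (0:ℝ)..1, (h t - c) ^ 2
      = (∫ t in (0:ℝ)..1, h t ^ 2) - c ^ 2 := by
    have heq : (fun t => (h t - c) ^ 2) = fun t => h t ^ 2 - (2*c) * h t + c ^ 2 := by
      funext t; ring
    rw [heq, intervalIntegral.integral_add (hi2.sub (hi.const_mul (2*c)))
          intervalIntegrable_const,
        intervalIntegral.integral_sub hi2 (hi.const_mul _),
        intervalIntegral.integral_const_mul, intervalIntegral.integral_const]
    simp only [← hc', smul_eq_mul, sub_zero, one_mul]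
    ring
  linarith [hexp ▸ h0]

lemma nat_sq_le' (k : ℕ) : k ^ 2 ≤ 12 * 2 ^ k := by
  induction k with
  | zero => norm_num
  | succ k ih =>
    have h2 : k + 1 ≤ 2 ^ k := Nat.lt_two_pow_self (n := k)
    calc (k+1)^2 = k^2 + (2*k+1) := by ring
      _ ≤ 12*2^k + 12*(k+1) := Nat.add_le_add ih (by omega)
      _ ≤ 12*2^k + 12*2^k := Nat.add_le_add_left (Nat.mul_le_mul_left _ h2) _
      _ = 12*2^(k+1) := by ring

lemma norm_sq_eq_sum' {d : ℕ} (v : EuclideanSpace ℝ (Fin d)) :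
    ‖v‖ ^ 2 = ∑ i, v i ^ 2 := by
  rw [EuclideanSpace.norm_eq, Real.sq_sqrt (Finset.sum_nonneg fun i _ => sq_nonneg _)]
  simp [Real.norm_eq_abs, sq_abs]

/-- For curves `C, Γ` bounded by 1 and uniformly `1/3`-close on `[0,1]`, the
squared Frobenius norm of the difference of `k`-th moment tensors is at most
`12 · 2^k · ρ(C, Γ)`. -/
theorem moment_difference_bound (d k : ℕ) (hk : 1 ≤ k)
    (C Γ : ℝ → EuclideanSpace ℝ (Fin d)) (hCc : Continuous C) (hΓc : Continuous Γ)
    (hclose : ∀ t ∈ Set.Icc (0:ℝ) 1, ‖C t - Γ t‖ ≤ 1 / 3)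
    (hCb : ∀ t ∈ Set.Icc (0:ℝ) 1, ‖C t‖ ≤ 1)
    (hΓb : ∀ t ∈ Set.Icc (0:ℝ) 1, ‖Γ t‖ ≤ 1) :
    (∑ j : Fin k → Fin d,
        ((∫ t in (0:ℝ)..1, ∏ a : Fin k, C t (j a))
          - ∫ t in (0:ℝ)..1, ∏ a : Fin k, Γ t (j a)) ^ 2)
      ≤ 12 * 2 ^ k * ∫ t in (0:ℝ)..1, ‖C t - Γ t‖ ^ 2 := by
  have hCi : ∀ i : Fin d, Continuous fun t => C t i :=
    fun i => (EuclideanSpace.proj (𝕜 := ℝ) i).continuous.comp hCc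
  have hΓi : ∀ i : Fin d, Continuous fun t => Γ t i :=
    fun i => (EuclideanSpace.proj (𝕜 := ℝ) i).continuous.comp hΓc
  have hCp : ∀ j : Fin k → Fin d, Continuous fun t => ∏ a, C t (j a) :=
    fun j => continuous_finset_prod _ fun a _ => hCi (j a)
  have hΓp : ∀ j : Fin k → Fin d, Continuous fun t => ∏ a, Γ t (j a) :=
    fun j => continuous_finset_prod _ fun a _ => hΓi (j a)
  have hdiffc : ∀ j : Fin k → Fin d,
      Continuous fun t => (∏ a, C t (j a)) - ∏ a, Γ t (j a) :=
    fun j => (hCp j).sub (hΓp j)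
  have hnc : Continuous fun t => ‖C t - Γ t‖ ^ 2 := ((hCc.sub hΓc).norm.pow 2)
  have step1 : ∀ j : Fin k → Fin d,
      (∫ t in (0:ℝ)..1, ∏ a : Fin k, C t (j a)) - ∫ t in (0:ℝ)..1, ∏ a : Fin k, Γ t (j a)
        = ∫ t in (0:ℝ)..1, ((∏ a, C t (j a)) - ∏ a, Γ t (j a)) := fun j =>
    (intervalIntegral.integral_sub ((hCp j).intervalIntegrable 0 1)
      ((hΓp j).intervalIntegrable 0 1)).symm
  calc (∑ j : Fin k → Fin d,
        ((∫ t in (0:ℝ)..1, ∏ a : Fin k, C t (j a))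
          - ∫ t in (0:ℝ)..1, ∏ a : Fin k, Γ t (j a)) ^ 2)
      = ∑ j : Fin k → Fin d,
          (∫ t in (0:ℝ)..1, ((∏ a, C t (j a)) - ∏ a, Γ t (j a))) ^ 2 := by
        exact Finset.sum_congr rfl fun j _ => by rw [step1 j]
    _ ≤ ∑ j : Fin k → Fin d,
          ∫ t in (0:ℝ)..1, ((∏ a, C t (j a)) - ∏ a, Γ t (j a)) ^ 2 :=
        Finset.sum_le_sum fun j _ => sq_intervalIntegral_le' _ (hdiffc j)
    _ = ∫ t in (0:ℝ)..1, ∑ j : Fin k → Fin d,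
          ((∏ a, C t (j a)) - ∏ a, Γ t (j a)) ^ 2 :=
        (intervalIntegral.integral_finset_sum fun j _ =>
          ((hdiffc j).pow 2).intervalIntegrable 0 1).symm
    _ ≤ ∫ t in (0:ℝ)..1, (k:ℝ) ^ 2 * ‖C t - Γ t‖ ^ 2 := by
        apply intervalIntegral.integral_mono_on (by norm_num)
        · exact (continuous_finset_sum _ fun j _ => (hdiffc j).pow 2).intervalIntegrable 0 1
        · exact (continuous_const.mul hnc).intervalIntegrable 0 1
        · intro t ht
          have hx : ∑ i, (C t) i ^ 2 ≤ 1 := by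
            rw [← norm_sq_eq_sum']
            nlinarith [hCb t ht, norm_nonneg (C t)]
          have hy : ∑ i, (Γ t) i ^ 2 ≤ 1 := by
            rw [← norm_sq_eq_sum']
            nlinarith [hΓb t ht, norm_nonneg (Γ t)]
          have := key_sq' k (fun i => C t i) (fun i => Γ t i) hx hy
          refine this.trans (le_of_eq ?_)
          congr 1
          rw [norm_sq_eq_sum']
          rfl
    _ = (k:ℝ) ^ 2 * ∫ t in (0:ℝ)..1, ‖C t - Γ t‖ ^ 2 :=
        intervalIntegral.integral_const_mul _ _
    _ ≤ 12 * 2 ^ k * ∫ t in (0:ℝ)..1, ‖C t - Γ t‖ ^ 2 := by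
        apply mul_le_mul_of_nonneg_right
        · exact_mod_cast nat_sq_le' k
        · exact intervalIntegral.integral_nonneg (by norm_num) fun t _ => sq_nonneg _
end
end

section
/- Let x, y ∈ ℝ^d satisfy ‖x‖ ≤ 1, ‖y‖ ≤ 1, and ‖x − y‖ ≤ 1/3, and let k ≥ 1. Then ‖x‖^{2k} − 2⟨x, y⟩^k + ‖y‖^{2k} ≤ 12 · 2^k ‖x − y‖². (The left-hand side equals the squared Frobenius norm ‖x^{⊗k} − y^{⊗k}‖_F² = Σ_{j_1,…,j_k} (x_{j_1}⋯x_{j_k} − y_{j_1}⋯y_{j_k})² of the difference of k-fold tensor powers.) -/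
open MeasureTheory Filter Set
noncomputable section

/-!
The left-hand side is `‖x^{⊗k} - y^{⊗k}‖²`, because the inner product of two pure tensors is the
product of the inner products of their factors. The tensor power is the diagonal of the
multilinear map `(v₁, …, v_k) ↦ v₁ ⊗ ⋯ ⊗ v_k`, whose norm is `∏ ‖vᵢ‖`; telescoping one factor at a
time therefore makes it `k`-Lipschitz on the unit ball. Hence the left-hand side is at most
`k² ‖x - y‖²`, and `k² ≤ 2 · 2^k`.
-/

section

variable {ι κ : Type*} [Fintype κ]

def tensorProd : MultilinearMap ℝ (fun _ : κ => EuclideanSpace ℝ ι) (EuclideanSpace ℝ (κ → ι)) :=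
  (WithLp.linearEquiv 2 ℝ _).symm.toLinearMap.compMultilinearMap <|
    MultilinearMap.pi fun j => (MultilinearMap.mkPiAlgebra ℝ κ ℝ).compLinearMap fun i =>
      (EuclideanSpace.proj (j i) : EuclideanSpace ℝ ι →L[ℝ] ℝ).toLinearMap

theorem tensorProd_apply (v : κ → EuclideanSpace ℝ ι) (j : κ → ι) :
    tensorProd v j = ∏ i, v i (j i) := by
  simp [tensorProd]

variable [Fintype ι] [DecidableEq κ]

theorem inner_tensorProd (v w : κ → EuclideanSpace ℝ ι) :
    inner ℝ (tensorProd v) (tensorProd w) = ∏ i, inner ℝ (v i) (w i) := by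
  simp only [PiLp.inner_apply, tensorProd_apply, RCLike.inner_apply, conj_trivial,
    Fintype.prod_sum, ← Finset.prod_mul_distrib]

theorem norm_tensorProd (v : κ → EuclideanSpace ℝ ι) : ‖tensorProd v‖ = ∏ i, ‖v i‖ := by
  have h : ‖tensorProd v‖ ^ 2 = (∏ i, ‖v i‖) ^ 2 := by
    rw [← real_inner_self_eq_norm_sq, inner_tensorProd, ← Finset.prod_pow]
    simp only [real_inner_self_eq_norm_sq]
  exact (pow_left_inj₀ (norm_nonneg _) (by positivity) two_ne_zero).mp h

end

section

variable {ι : Type*} [Fintype ι]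

def tensorPower (k : ℕ) (x : EuclideanSpace ℝ ι) : EuclideanSpace ℝ (Fin k → ι) :=
  tensorProd fun _ => x

theorem inner_tensorPower (k : ℕ) (x y : EuclideanSpace ℝ ι) :
    inner ℝ (tensorPower k x) (tensorPower k y) = inner ℝ x y ^ k := by
  simp [tensorPower, inner_tensorProd]

theorem norm_tensorPower (k : ℕ) (x : EuclideanSpace ℝ ι) : ‖tensorPower k x‖ = ‖x‖ ^ k := by
  simp [tensorPower, norm_tensorProd]

theorem norm_tensorPower_sub_sq (k : ℕ) (x y : EuclideanSpace ℝ ι) :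
    ‖tensorPower k x - tensorPower k y‖ ^ 2 =
      ‖x‖ ^ (2 * k) - 2 * inner ℝ x y ^ k + ‖y‖ ^ (2 * k) := by
  rw [norm_sub_sq_real, inner_tensorPower, norm_tensorPower, norm_tensorPower, ← pow_mul,
    ← pow_mul, mul_comm k]

theorem norm_tensorPower_sub_le {k : ℕ} {x y : EuclideanSpace ℝ ι} (hx : ‖x‖ ≤ 1)
    (hy : ‖y‖ ≤ 1) : ‖tensorPower k x - tensorPower k y‖ ≤ k * ‖x - y‖ := by
  have hLipschitz := tensorProd.norm_image_sub_le_of_bound zero_le_one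
    (fun v => (norm_tensorProd v).trans_le (one_mul _).ge) (fun _ : Fin k => x) fun _ => y
  simp only [one_mul, Fintype.card_fin] at hLipschitz
  calc ‖tensorPower k x - tensorPower k y‖
      ≤ k * max ‖fun _ : Fin k => x‖ ‖fun _ : Fin k => y‖ ^ (k - 1) * ‖fun _ : Fin k => x - y‖ :=
        hLipschitz
    _ ≤ k * 1 * ‖x - y‖ := by
        gcongr
        · exact pow_le_one₀ (by positivity)
            (max_le ((pi_norm_const_le x).trans hx) ((pi_norm_const_le y).trans hy))
        · exact pi_norm_const_le _
    _ = k * ‖x - y‖ := by rw [mul_one]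

end

theorem Nat.sq_le_two_mul_two_pow (n : ℕ) : n ^ 2 ≤ 2 * 2 ^ n := by
  induction n with
  | zero => norm_num
  | succ n ih =>
    have h : n < 2 ^ n := Nat.lt_two_pow_self
    rw [pow_succ 2 n]
    nlinarith

theorem tensor_power_difference_bound_general (d k : ℕ)
    (x y : EuclideanSpace ℝ (Fin d)) (hx : ‖x‖ ≤ 1) (hy : ‖y‖ ≤ 1) :
    ‖x‖ ^ (2 * k) - 2 * (inner ℝ x y : ℝ) ^ k + ‖y‖ ^ (2 * k)
      ≤ 12 * 2 ^ k * ‖x - y‖ ^ 2 := by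
  rw [← norm_tensorPower_sub_sq]
  calc ‖tensorPower k x - tensorPower k y‖ ^ 2 ≤ (k * ‖x - y‖) ^ 2 := by
        gcongr
        exact norm_tensorPower_sub_le hx hy
    _ ≤ 2 * 2 ^ k * ‖x - y‖ ^ 2 := by
        rw [mul_pow]
        gcongr
        exact_mod_cast Nat.sq_le_two_mul_two_pow k
    _ ≤ 12 * 2 ^ k * ‖x - y‖ ^ 2 := by gcongr; norm_num

/-- For `x, y ∈ ℝ^d` with `‖x‖ ≤ 1`, `‖y‖ ≤ 1` and `‖x − y‖ ≤ 1/3`, and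
`k ≥ 1`, the squared Frobenius norm of the difference of `k`-fold tensor powers,
`‖x^{⊗k} − y^{⊗k}‖_F² = ‖x‖^{2k} − 2⟨x,y⟩^k + ‖y‖^{2k}`, is at most `12 · 2^k ‖x − y‖²`. -/
theorem tensor_power_difference_bound (d k : ℕ) (hk : 1 ≤ k)
    (x y : EuclideanSpace ℝ (Fin d)) (hx : ‖x‖ ≤ 1) (hy : ‖y‖ ≤ 1)
    (hxy : ‖x - y‖ ≤ 1 / 3) :
    ‖x‖ ^ (2 * k) - 2 * (inner ℝ x y : ℝ) ^ k + ‖y‖ ^ (2 * k)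
      ≤ 12 * 2 ^ k * ‖x - y‖ ^ 2 :=
  tensor_power_difference_bound_general d k x y hx hy
end
end
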